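/- arXiv:1111.6211 — 2 statements merged into one kernel-verified Lean document; each statement's English description precedes it below -/
import Mathlib

section
/- A numerical semigroup H is almost symmetric and has maximal embedding dimension if and only if H* = M − M is symmetric. -/
/-- A numerical semigroup, viewed as a set of integers: a set of nonnegative
integers containing 0, closed under addition, with finite complement in ℕ. -/
def IsNumericalSemigroup (S : Set ℤ) : Prop :=
  (∀ x ∈ S, 0 ≤ x) ∧ 0 ∈ S ∧ (∀ a ∈ S, ∀ b ∈ S, a + b ∈ S) ∧
    {z : ℤ | 0 ≤ z ∧ z ∉ S}.Finite

/-- The genus: the number of nonnegative integers not in `S`. -/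
noncomputable def genus (S : Set ℤ) : ℕ := {z : ℤ | 0 ≤ z ∧ z ∉ S}.ncard

/-- The Frobenius number: the largest integer not in `S`. -/
noncomputable def frob (S : Set ℤ) : ℤ := sSup {z : ℤ | z ∉ S}

/-- The set of pseudo-Frobenius numbers. -/
def PF (S : Set ℤ) : Set ℤ := {x : ℤ | x ∉ S ∧ ∀ h ∈ S, h ≠ 0 → x + h ∈ S}

/-- The type: the number of pseudo-Frobenius numbers. -/
noncomputable def typ (S : Set ℤ) : ℕ := (PF S).ncard

/-- The multiplicity: the smallest nonzero element of `S`. -/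
noncomputable def mult (S : Set ℤ) : ℤ := sInf {z : ℤ | z ∈ S ∧ z ≠ 0}

/-- The Apéry set of `S` with respect to `n`. -/
def apery (S : Set ℤ) (n : ℤ) : Set ℤ := {s ∈ S | s - n ∉ S}

/-- The dual `H* = M - M` of the maximal ideal `M = S \ {0}`. -/
def dual (S : Set ℤ) : Set ℤ :=
  {z : ℤ | ∀ m ∈ S, m ≠ 0 → z + m ∈ S ∧ z + m ≠ 0}

/-- Almost symmetric: `2 g(S) = F(S) + t(S)`. -/
def AlmostSymmetric (S : Set ℤ) : Prop := 2 * (genus S : ℤ) = frob S + (typ S : ℤ)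

/-- Symmetric: `2 g(S) = F(S) + 1`. -/
def SymmetricNS (S : Set ℤ) : Prop := 2 * (genus S : ℤ) = frob S + 1

/-- Pseudo-symmetric: `2 g(S) = F(S) + 2`. -/
def PseudoSymmetric (S : Set ℤ) : Prop := 2 * (genus S : ℤ) = frob S + 2

/-- The set of minimal generators of `S`: nonzero elements not expressible as the
sum of two nonzero elements of `S`. -/
def minGens (S : Set ℤ) : Set ℤ :=
  {x ∈ S | x ≠ 0 ∧ ∀ a ∈ S, ∀ b ∈ S, a ≠ 0 → b ≠ 0 → x ≠ a + b}

/-- The embedding dimension: the number of minimal generators. -/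
noncomputable def embdim (S : Set ℤ) : ℕ := (minGens S).ncard

/-- The gluing `⟨x S₁, y S₂⟩` of two numerical semigroups. -/
def glue (x y : ℤ) (S₁ S₂ : Set ℤ) : Set ℤ :=
  {z : ℤ | ∃ a ∈ S₁, ∃ b ∈ S₂, z = x * a + y * b}

/-! Write `m` for the multiplicity, `F` for the Frobenius number and `H* = M - M` for the dual.
If `H ≠ ℕ`, then `H ⊆ H*`, `F(H*) = F - m` and `PF(H) = H* \ H`, so `g(H) = g(H*) + t(H)`.
Maximal embedding dimension means `x + y - m ∈ H` for all `x, y ∈ M`, i.e. every nonzero element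
of the Apéry set `Ap(H, m)` is a minimal generator; it forces `H* \ H = (Ap(H, m) \ {0}) - m`,
hence `t(H) = m - 1`. With these identities, `2g(H) = F + t(H)` together with `t(H) = m - 1` is
exactly `2g(H*) = F(H*) + 1`. Conversely, if `H*` is symmetric and `x ∈ M` had `x - m ∉ H*`, then
`F(H*) - (x - m) = F - x ∈ H*`, so `F ∈ H`; thus `M - m ⊆ H*`, which is maximal embedding
dimension. For `H = ℕ` both sides hold. -/

theorem frob_eq_of_forall_lt_mem {T : Set ℤ} {f : ℤ} (hf : f ∉ T) (hT : ∀ z, f < z → z ∈ T) :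
    frob T = f :=
  IsGreatest.csSup_eq ⟨hf, fun z hz => not_lt.1 fun h => hz (hT z h)⟩

theorem genus_eq_genus_add_ncard_diff {T T' : Set ℤ} (hTT' : T ⊆ T') (hT' : ∀ z ∈ T', 0 ≤ z)
    (hfin : {z : ℤ | 0 ≤ z ∧ z ∉ T}.Finite) :
    genus T = genus T' + (T' \ T).ncard := by
  have hsplit : {z : ℤ | 0 ≤ z ∧ z ∉ T} = {z | 0 ≤ z ∧ z ∉ T'} ∪ (T' \ T) := by
    ext z
    constructor
    · rintro ⟨hz, hzT⟩
      by_cases hzT' : z ∈ T'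
      · exact Or.inr ⟨hzT', hzT⟩
      · exact Or.inl ⟨hz, hzT'⟩
    · rintro (⟨hz, hzT'⟩ | ⟨hzT', hzT⟩)
      · exact ⟨hz, fun h => hzT' (hTT' h)⟩
      · exact ⟨hT' z hzT', hzT⟩
  have hdisj : Disjoint {z : ℤ | 0 ≤ z ∧ z ∉ T'} (T' \ T) :=
    Set.disjoint_left.2 fun _ hz hz' => hz.2 hz'.1
  rw [genus, genus, hsplit, Set.ncard_union_eq hdisj (hfin.subset (hsplit ▸ Set.subset_union_left))
    (hfin.subset (hsplit ▸ Set.subset_union_right))]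

namespace IsNumericalSemigroup

variable {S : Set ℤ} {x y : ℤ}

theorem nonneg (hS : IsNumericalSemigroup S) (hx : x ∈ S) : 0 ≤ x := hS.1 x hx

theorem zero_mem (hS : IsNumericalSemigroup S) : (0 : ℤ) ∈ S := hS.2.1

theorem add_mem (hS : IsNumericalSemigroup S) (hx : x ∈ S) (hy : y ∈ S) : x + y ∈ S :=
  hS.2.2.1 x hx y hy

theorem finite_gaps (hS : IsNumericalSemigroup S) : {z : ℤ | 0 ≤ z ∧ z ∉ S}.Finite := hS.2.2.2

theorem neg_one_not_mem (hS : IsNumericalSemigroup S) : (-1 : ℤ) ∉ S :=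
  fun h => by linarith [hS.nonneg h]

theorem bddAbove_compl (hS : IsNumericalSemigroup S) : BddAbove {z : ℤ | z ∉ S} := by
  obtain ⟨c, hc⟩ := hS.finite_gaps.bddAbove
  refine ⟨max c 0, fun z hz => ?_⟩
  by_cases h : 0 ≤ z
  · exact (hc ⟨h, hz⟩).trans (le_max_left _ _)
  · exact (not_le.1 h).le.trans (le_max_right _ _)

theorem frob_not_mem (hS : IsNumericalSemigroup S) : frob S ∉ S :=
  Int.csSup_mem ⟨-1, hS.neg_one_not_mem⟩ hS.bddAbove_compl

theorem le_frob (hS : IsNumericalSemigroup S) (hx : x ∉ S) : x ≤ frob S :=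
  le_csSup hS.bddAbove_compl hx

theorem mem_of_frob_lt (hS : IsNumericalSemigroup S) (hx : frob S < x) : x ∈ S :=
  by_contra fun h => (hS.le_frob h).not_gt hx

theorem frob_nonneg_of_ne_Ici (hS : IsNumericalSemigroup S) (hne : S ≠ Set.Ici 0) :
    0 ≤ frob S := by
  obtain ⟨z, hz, hzS⟩ : ∃ z, 0 ≤ z ∧ z ∉ S := by
    by_contra! h
    exact hne (Set.ext fun z => ⟨hS.nonneg, h z⟩)
  exact hz.trans (hS.le_frob hzS)

theorem mult_mem_and_ne_zero (hS : IsNumericalSemigroup S) : mult S ∈ S ∧ mult S ≠ 0 :=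
  Int.csInf_mem (s := {z | z ∈ S ∧ z ≠ 0})
    ⟨max (frob S + 1) 1, hS.mem_of_frob_lt (by omega), by omega⟩
    ⟨0, fun _ hz => hS.nonneg hz.1⟩

theorem mult_mem (hS : IsNumericalSemigroup S) : mult S ∈ S := hS.mult_mem_and_ne_zero.1

theorem mult_ne_zero (hS : IsNumericalSemigroup S) : mult S ≠ 0 := hS.mult_mem_and_ne_zero.2

theorem mult_pos (hS : IsNumericalSemigroup S) : 0 < mult S :=
  lt_of_le_of_ne (hS.nonneg hS.mult_mem) hS.mult_ne_zero.symm

theorem mult_le (hS : IsNumericalSemigroup S) (hx : x ∈ S) (hx0 : x ≠ 0) : mult S ≤ x :=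
  csInf_le ⟨0, fun _ hz => hS.nonneg hz.1⟩ ⟨hx, hx0⟩

theorem add_mul_mult_mem (hS : IsNumericalSemigroup S) (hx : x ∈ S) {k : ℤ} (hk : 0 ≤ k) :
    x + k * mult S ∈ S := by
  induction k, hk using Int.leInduction with
  | base => simpa using hx
  | succ k _ ih => simpa [add_mul, ← add_assoc] using hS.add_mem ih hS.mult_mem

theorem sub_mult_mem_of_emod_eq (hS : IsNumericalSemigroup S) (hx : x ∈ S)
    (hxy : x % mult S = y % mult S) (hlt : x < y) : y - mult S ∈ S := by
  obtain ⟨k, hk⟩ : mult S ∣ y - x := Int.ModEq.dvd hxy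
  have hk1 : 0 ≤ k - 1 := by nlinarith [hS.mult_pos]
  convert hS.add_mul_mult_mem hx hk1 using 1
  linear_combination hk

theorem zero_mem_apery (hS : IsNumericalSemigroup S) : 0 ∈ apery S (mult S) :=
  ⟨hS.zero_mem, fun h => by linarith [hS.nonneg h, hS.mult_pos]⟩

theorem mult_not_mem_apery (hS : IsNumericalSemigroup S) : mult S ∉ apery S (mult S) :=
  fun h => h.2 (by simpa using hS.zero_mem)

theorem emod_injOn_apery (hS : IsNumericalSemigroup S) :
    Set.InjOn (· % mult S) (apery S (mult S)) := by
  intro w hw w' hw' h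
  rcases lt_trichotomy w w' with hlt | heq | hlt
  · exact absurd (hS.sub_mult_mem_of_emod_eq hw.1 h hlt) hw'.2
  · exact heq
  · exact absurd (hS.sub_mult_mem_of_emod_eq hw'.1 h.symm hlt) hw.2

theorem exists_mem_apery_emod_eq (hS : IsNumericalSemigroup S) (r : ℤ) :
    ∃ w ∈ apery S (mult S), w % mult S = r % mult S := by
  set A := {s | s ∈ S ∧ s % mult S = r % mult S}
  have hbdd : BddBelow A := ⟨0, fun _ hz => hS.nonneg hz.1⟩
  have hA : r % mult S + mult S * (frob S + 1) ∈ A := by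
    refine ⟨hS.mem_of_frob_lt ?_, by rw [Int.add_mul_emod_self_left, Int.emod_emod]⟩
    nlinarith [Int.emod_nonneg r hS.mult_ne_zero, hS.mult_pos, hS.le_frob hS.neg_one_not_mem]
  obtain ⟨hwS, hwr⟩ := Int.csInf_mem ⟨_, hA⟩ hbdd
  refine ⟨sInf A, ⟨hwS, fun h => ?_⟩, hwr⟩
  have := csInf_le hbdd ⟨h, (Int.sub_emod_right _ _).trans hwr⟩
  linarith [hS.mult_pos]

theorem emod_image_apery (hS : IsNumericalSemigroup S) :
    (· % mult S) '' apery S (mult S) = Set.Ico 0 (mult S) := by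
  ext r
  constructor
  · rintro ⟨w, -, rfl⟩
    exact ⟨Int.emod_nonneg _ hS.mult_ne_zero, Int.emod_lt_of_pos _ hS.mult_pos⟩
  · rintro ⟨hr0, hrm⟩
    obtain ⟨w, hw, hwr⟩ := hS.exists_mem_apery_emod_eq r
    exact ⟨w, hw, hwr.trans (Int.emod_eq_of_lt hr0 hrm)⟩

theorem finite_apery (hS : IsNumericalSemigroup S) : (apery S (mult S)).Finite :=
  .of_finite_image (hS.emod_image_apery ▸ Set.finite_Ico _ _) hS.emod_injOn_apery

theorem ncard_apery_diff_zero (hS : IsNumericalSemigroup S) :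
    ((apery S (mult S) \ {0}).ncard : ℤ) = mult S - 1 := by
  have hcard : ((apery S (mult S)).ncard : ℤ) = mult S := by
    rw [← hS.emod_injOn_apery.ncard_image, hS.emod_image_apery, ← Finset.coe_Ico,
      Set.ncard_coe_finset, Int.card_Ico, sub_zero, Int.toNat_of_nonneg hS.mult_pos.le]
  rw [Set.ncard_sdiff_singleton_of_mem hS.zero_mem_apery]
  have := hS.mult_pos
  omega

theorem minGens_subset (hS : IsNumericalSemigroup S) :
    minGens S ⊆ insert (mult S) (apery S (mult S) \ {0}) := by
  rintro x ⟨hxS, hx0, hirr⟩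
  rcases eq_or_ne x (mult S) with rfl | hxm
  · exact Set.mem_insert _ _
  refine Set.mem_insert_of_mem _ ⟨⟨hxS, fun h => ?_⟩, hx0⟩
  exact hirr _ hS.mult_mem _ h hS.mult_ne_zero (sub_ne_zero.2 hxm) (by ring)

theorem mult_mem_minGens (hS : IsNumericalSemigroup S) : mult S ∈ minGens S := by
  refine ⟨hS.mult_mem, hS.mult_ne_zero, fun a ha b hb ha0 hb0 h => ?_⟩
  linarith [hS.mult_le ha ha0, hS.mult_le hb hb0, hS.mult_pos]

theorem embdim_eq_mult_iff (hS : IsNumericalSemigroup S) :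
    (embdim S : ℤ) = mult S ↔ ∀ x ∈ S, ∀ y ∈ S, x ≠ 0 → y ≠ 0 → x + y - mult S ∈ S := by
  have hcard : ((insert (mult S) (apery S (mult S) \ {0})).ncard : ℤ) = mult S := by
    rw [Set.ncard_insert_of_notMem (fun h => hS.mult_not_mem_apery h.1) hS.finite_apery.sdiff,
      Nat.cast_add, hS.ncard_apery_diff_zero]
    ring
  constructor
  · intro he x hx y hy hx0 hy0
    by_contra hxy
    have heq : minGens S = insert (mult S) (apery S (mult S) \ {0}) :=
      Set.eq_of_subset_of_ncard_le hS.minGens_subset (by rw [embdim] at he; omega)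
        (hS.finite_apery.sdiff.insert _)
    have hxy0 : x + y ≠ 0 := by linarith [hS.mult_le hx hx0, hS.mult_le hy hy0, hS.mult_pos]
    have hgen : x + y ∈ minGens S :=
      heq ▸ Set.mem_insert_of_mem _ ⟨⟨hS.add_mem hx hy, hxy⟩, hxy0⟩
    exact hgen.2.2 x hx y hy hx0 hy0 rfl
  · intro hmed
    have heq : minGens S = insert (mult S) (apery S (mult S) \ {0}) := by
      refine hS.minGens_subset.antisymm (Set.insert_subset hS.mult_mem_minGens ?_)
      rintro w ⟨⟨hwS, hw⟩, hw0⟩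
      exact ⟨hwS, hw0, fun a ha b hb ha0 hb0 hab => hw (hab ▸ hmed a ha b hb ha0 hb0)⟩
    rw [embdim, heq, hcard]

theorem frob_sub_mem_of_symmetricNS (hS : IsNumericalSemigroup S) (hsym : SymmetricNS S)
    (hx : 0 ≤ x) (hxS : x ∉ S) : frob S - x ∈ S := by
  set F := frob S
  have hgaps : {z : ℤ | 0 ≤ z ∧ z ∉ S} = Set.Icc 0 F \ S :=
    Set.ext fun z => ⟨fun hz => ⟨⟨hz.1, hS.le_frob hz.2⟩, hz.2⟩, fun hz => ⟨hz.1.1, hz.2⟩⟩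
  have hsplit := Set.ncard_inter_add_ncard_sdiff_eq_ncard (Set.Icc 0 F) S (Set.finite_Icc 0 F)
  rw [← Finset.coe_Icc, Set.ncard_coe_finset, Int.card_Icc, Finset.coe_Icc] at hsplit
  have hgenus : 2 * ((Set.Icc 0 F \ S).ncard : ℤ) = F + 1 := by rw [← hgaps]; exact hsym
  -- `z ↦ F - z` maps the elements of `S` below `F` into the gaps, and there are equally many.
  have hmaps : (F - ·) '' (Set.Icc 0 F ∩ S) ⊆ Set.Icc 0 F \ S := by
    rintro _ ⟨z, ⟨⟨hz0, hzF⟩, hzS⟩, rfl⟩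
    refine ⟨⟨by linarith, by linarith⟩, fun h => hS.frob_not_mem ?_⟩
    simpa using hS.add_mem hzS h
  have heq := Set.eq_of_subset_of_ncard_le hmaps
    (by rw [Set.ncard_image_of_injective _ sub_right_injective]; omega)
    ((Set.finite_Icc 0 F).sdiff)
  obtain ⟨z, ⟨-, hzS⟩, hxz⟩ : x ∈ (F - ·) '' (Set.Icc 0 F ∩ S) :=
    heq ▸ ⟨⟨hx, hS.le_frob hxS⟩, hxS⟩
  simpa [← hxz] using hzS

theorem subset_dual (hS : IsNumericalSemigroup S) : S ⊆ dual S := fun _ hs _ hm hm0 =>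
  ⟨hS.add_mem hs hm, by linarith [hS.nonneg hs, hS.mult_le hm hm0, hS.mult_pos]⟩

theorem dual_isNumericalSemigroup (hS : IsNumericalSemigroup S) :
    IsNumericalSemigroup (dual S) := by
  refine ⟨fun z hz => ?_, hS.subset_dual hS.zero_mem, fun a ha b hb h hh hh0 => ?_,
    hS.finite_gaps.subset fun z hz => ⟨hz.1, fun h => hz.2 (hS.subset_dual h)⟩⟩
  · obtain ⟨hzm, hzm0⟩ := hz _ hS.mult_mem hS.mult_ne_zero
    linarith [hS.mult_le hzm hzm0]
  · obtain ⟨hbh, hbh0⟩ := hb h hh hh0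
    simpa [add_assoc] using ha _ hbh hbh0

theorem frob_dual (hS : IsNumericalSemigroup S) (hF : 0 ≤ frob S) :
    frob (dual S) = frob S - mult S := by
  refine frob_eq_of_forall_lt_mem (fun h => hS.frob_not_mem ?_) fun z hz h hh hh0 => ?_
  · simpa using (h _ hS.mult_mem hS.mult_ne_zero).1
  · have := hS.mult_le hh hh0
    exact ⟨hS.mem_of_frob_lt (by linarith), by linarith⟩

theorem PF_eq_dual_diff (hS : IsNumericalSemigroup S) (hF : 0 ≤ frob S) :
    PF S = dual S \ S := by
  ext x
  constructor
  · rintro ⟨hxS, hx⟩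
    refine ⟨fun h hh hh0 => ⟨hx h hh hh0, fun hxh => ?_⟩, hxS⟩
    have hFh : frob S + h ∈ S := hS.mem_of_frob_lt (by linarith [hS.mult_le hh hh0, hS.mult_pos])
    have hFh0 : frob S + h ≠ 0 := by linarith [hS.mult_le hh hh0, hS.mult_pos]
    have hxFh := hx _ hFh hFh0
    rw [show x + (frob S + h) = frob S by linarith] at hxFh
    exact hS.frob_not_mem hxFh
  · rintro ⟨hxD, hxS⟩
    exact ⟨hxS, fun h hh hh0 => (hxD h hh hh0).1⟩

theorem genus_eq_genus_dual_add_typ (hS : IsNumericalSemigroup S) (hF : 0 ≤ frob S) :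
    genus S = genus (dual S) + typ S := by
  rw [typ, hS.PF_eq_dual_diff hF]
  exact genus_eq_genus_add_ncard_diff hS.subset_dual
    (fun _ hz => hS.dual_isNumericalSemigroup.nonneg hz) hS.finite_gaps

theorem dual_diff_eq_image_apery (hS : IsNumericalSemigroup S)
    (hmed : ∀ x ∈ S, ∀ y ∈ S, x ≠ 0 → y ≠ 0 → x + y - mult S ∈ S) :
    dual S \ S = (· - mult S) '' (apery S (mult S) \ {0}) := by
  ext f
  constructor
  · rintro ⟨hfD, hfS⟩
    obtain ⟨hfm, hfm0⟩ := hfD _ hS.mult_mem hS.mult_ne_zero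
    exact ⟨f + mult S, ⟨⟨hfm, by simpa using hfS⟩, hfm0⟩, by simp⟩
  · rintro ⟨w, ⟨⟨hwS, hw⟩, hw0⟩, rfl⟩
    refine ⟨fun y hy hy0 => ⟨by simpa [sub_add_eq_add_sub] using hmed w hwS y hy hw0 hy0, ?_⟩, hw⟩
    have : 0 < w := lt_of_le_of_ne (hS.nonneg hwS) (Ne.symm hw0)
    linarith [hS.mult_le hy hy0]

theorem typ_eq_mult_sub_one (hS : IsNumericalSemigroup S) (hF : 0 ≤ frob S)
    (hmed : ∀ x ∈ S, ∀ y ∈ S, x ≠ 0 → y ≠ 0 → x + y - mult S ∈ S) :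
    (typ S : ℤ) = mult S - 1 := by
  rw [typ, hS.PF_eq_dual_diff hF, hS.dual_diff_eq_image_apery hmed,
    Set.ncard_image_of_injective _ sub_left_injective, hS.ncard_apery_diff_zero]

theorem add_sub_mult_mem_of_symmetricNS_dual (hS : IsNumericalSemigroup S) (hF : 0 ≤ frob S)
    (hsym : SymmetricNS (dual S)) :
    ∀ x ∈ S, ∀ y ∈ S, x ≠ 0 → y ≠ 0 → x + y - mult S ∈ S := by
  intro x hx y hy hx0 hy0
  suffices hxD : x - mult S ∈ dual S by simpa [sub_add_eq_add_sub] using (hxD y hy hy0).1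
  by_contra hxD
  have hFx := hS.dual_isNumericalSemigroup.frob_sub_mem_of_symmetricNS hsym
    (by linarith [hS.mult_le hx hx0]) hxD
  rw [hS.frob_dual hF] at hFx
  exact hS.frob_not_mem (by simpa using (hFx x hx hx0).1)

end IsNumericalSemigroup

theorem genus_Ici_zero : genus (Set.Ici (0 : ℤ)) = 0 := by
  have : {z : ℤ | 0 ≤ z ∧ z ∉ Set.Ici 0} = ∅ := by ext; simp
  rw [genus, this, Set.ncard_empty]

theorem frob_Ici_zero : frob (Set.Ici (0 : ℤ)) = -1 :=
  frob_eq_of_forall_lt_mem (by simp) fun z hz => by simp; omega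

theorem typ_Ici_zero : typ (Set.Ici (0 : ℤ)) = 1 := by
  have : PF (Set.Ici (0 : ℤ)) = {-1} := by
    ext x
    simp only [PF, Set.mem_Ici, Set.mem_ofPred_eq, Set.mem_singleton_iff]
    constructor
    · rintro ⟨hx, hx1⟩
      have := hx1 1 (by norm_num) (by norm_num)
      omega
    · rintro rfl
      exact ⟨by norm_num, fun h hh hh0 => by omega⟩
  rw [typ, this, Set.ncard_singleton]

theorem dual_Ici_zero : dual (Set.Ici (0 : ℤ)) = Set.Ici 0 := by
  ext z
  simp only [dual, Set.mem_Ici, Set.mem_ofPred_eq]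
  constructor
  · intro h
    have := h 1 (by norm_num) (by norm_num)
    omega
  · intro hz m hm hm0
    omega

theorem stmt11 (S : Set ℤ) (hS : IsNumericalSemigroup S) :
    (AlmostSymmetric S ∧ (embdim S : ℤ) = mult S) ↔ SymmetricNS (dual S) := by
  rcases eq_or_ne S (Set.Ici 0) with rfl | hne
  · refine iff_of_true ⟨?_, hS.embdim_eq_mult_iff.2 fun x hx y hy hx0 _ => ?_⟩ ?_
    · simp [AlmostSymmetric, genus_Ici_zero, frob_Ici_zero, typ_Ici_zero]
    · have := hS.mult_le hx hx0
      simp only [Set.mem_Ici] at hy ⊢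
      omega
    · simp [SymmetricNS, dual_Ici_zero, genus_Ici_zero, frob_Ici_zero]
  have hF : 0 ≤ frob S := hS.frob_nonneg_of_ne_Ici hne
  have hgenus := hS.genus_eq_genus_dual_add_typ hF
  rw [AlmostSymmetric, hS.embdim_eq_mult_iff, hgenus, Nat.cast_add]
  constructor
  · rintro ⟨hAS, hmed⟩
    have := hS.typ_eq_mult_sub_one hF hmed
    rw [SymmetricNS, hS.frob_dual hF]
    linarith
  · intro hsym
    have hmed := hS.add_sub_mult_mem_of_symmetricNS_dual hF hsym
    have := hS.typ_eq_mult_sub_one hF hmed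
    rw [SymmetricNS, hS.frob_dual hF] at hsym
    exact ⟨by linarith, hmed⟩
end

section
/- Let H_1 and H_2 be numerical semigroups and suppose at least one of them is not symmetric. Then any gluing H = ⟨xH_1, yH_2⟩ of H_1 and H_2 is not almost symmetric. -/
/-!
Write `F` for the Frobenius number and call a gap `w` a hole when `F - w` is a gap too. The
reflection `z ↦ F - z` maps the elements of `S` below `F` injectively onto the non-hole gaps, so
`2 g = F + 1 + #holes`. Every pseudo-Frobenius number other than `F` is a hole, so `t ≤ #holes + 1`,
with equality exactly when `S` is almost symmetric; then every hole is a pseudo-Frobenius number.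

In the gluing `H = ⟨x S₁, y S₂⟩` the integer `x a + y b + x y` is a gap whenever `a` and `b` are
gaps of `S₁` and `S₂`; in particular `F(H) = x F₁ + y F₂ + x y`. If `f ≠ F₁` is a pseudo-Frobenius
number of `S₁`, then `d = F₁ - f` is a gap, and `w = x d` is a hole of `H` (as
`F(H) - w = x f + y F₂ + x y`) which is not pseudo-Frobenius, since adding `y (F₂ + x) ∈ H`
gives the gap `x d + y F₂ + x y`.
-/

def holes (S : Set ℤ) : Set ℤ := {w | w ∉ S ∧ frob S - w ∉ S}

theorem Int.ncard_Icc (a b : ℤ) : (Set.Icc a b).ncard = (b + 1 - a).toNat := by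
  rw [← Finset.coe_Icc, Set.ncard_coe_finset, Int.card_Icc]

theorem Int.two_le_of_gcd_eq_one {x y : ℤ} (hx : 0 ≤ x) (hy : 0 ≤ y) (hx1 : x ≠ 1) (hy1 : y ≠ 1)
    (h : Int.gcd x y = 1) : 2 ≤ x ∧ 2 ≤ y := by
  have hx0 : x ≠ 0 := by
    rintro rfl
    rw [Int.gcd_zero_left] at h
    omega
  have hy0 : y ≠ 0 := by
    rintro rfl
    rw [Int.gcd_zero_right] at h
    omega
  omega

namespace IsNumericalSemigroup

variable {S : Set ℤ} {a b f z : ℤ}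

theorem isGreatest_frob (h : IsNumericalSemigroup S) : IsGreatest {z | z ∉ S} (frob S) := by
  have hbdd : BddAbove {z : ℤ | z ∉ S} := by
    obtain ⟨b, hb⟩ := h.2.2.2.bddAbove
    refine ⟨max b 0, fun z hz => ?_⟩
    rcases le_or_gt z 0 with hz0 | hz0
    · exact hz0.trans (le_max_right _ _)
    · exact (hb ⟨hz0.le, hz⟩).trans (le_max_left _ _)
  have hne : {z : ℤ | z ∉ S}.Nonempty := ⟨-1, fun hc => by linarith [h.1 _ hc]⟩
  exact ⟨Int.csSup_mem hne hbdd, fun _ hz => le_csSup hbdd hz⟩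

theorem frob_notMem (h : IsNumericalSemigroup S) : frob S ∉ S := h.isGreatest_frob.1

theorem le_frob_s19 (h : IsNumericalSemigroup S) (hz : z ∉ S) : z ≤ frob S := h.isGreatest_frob.2 hz

theorem mem_of_frob_lt_s19 (h : IsNumericalSemigroup S) (hz : frob S < z) : z ∈ S := by
  by_contra hc
  exact hz.not_ge (h.le_frob_s19 hc)

theorem neg_one_le_frob (h : IsNumericalSemigroup S) : -1 ≤ frob S :=
  h.le_frob_s19 fun hc => by linarith [h.1 _ hc]

theorem add_mul_mem (h : IsNumericalSemigroup S) (ha : a ∈ S) (hb : b ∈ S) {k : ℤ} (hk : 0 ≤ k) :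
    a + k * b ∈ S := by
  induction k, hk using Int.leInduction with
  | base => simpa using ha
  | succ k _ ih =>
    rw [add_one_mul, ← add_assoc]
    exact h.2.2.1 _ ih _ hb

theorem frob_sub_notMem (h : IsNumericalSemigroup S) (ha : a ∈ S) : frob S - a ∉ S := fun hc =>
  h.frob_notMem (by simpa using h.2.2.1 _ ha _ hc)

theorem frob_mem_PF (h : IsNumericalSemigroup S) : frob S ∈ PF S :=
  ⟨h.frob_notMem, fun t ht ht0 =>
    h.mem_of_frob_lt_s19 (by linarith [lt_of_le_of_ne (h.1 t ht) (Ne.symm ht0)])⟩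

theorem exists_mem_PF_ne_frob (h : IsNumericalSemigroup S) (ht : typ S ≠ 1) :
    ∃ f ∈ PF S, f ≠ frob S := by
  by_contra! hc
  exact ht (by rw [typ, Set.eq_singleton_iff_unique_mem.mpr ⟨h.frob_mem_PF, hc⟩,
    Set.ncard_singleton])

theorem frob_sub_notMem_of_mem_PF (h : IsNumericalSemigroup S) (hf : f ∈ PF S)
    (hne : f ≠ frob S) : frob S - f ∉ S := fun hc =>
  h.frob_notMem (by simpa using hf.2 _ hc (sub_ne_zero.mpr hne.symm))

theorem one_mem_minGens (h : IsNumericalSemigroup S) (h1 : 1 ∈ S) : 1 ∈ minGens S := by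
  refine ⟨h1, one_ne_zero, fun a ha b hb ha0 hb0 => ?_⟩
  have := lt_of_le_of_ne (h.1 a ha) (Ne.symm ha0)
  have := lt_of_le_of_ne (h.1 b hb) (Ne.symm hb0)
  omega

theorem holes_subset_Icc (h : IsNumericalSemigroup S) : holes S ⊆ Set.Icc 0 (frob S) :=
  fun w ⟨hw, hw'⟩ => ⟨by linarith [h.le_frob_s19 hw'], h.le_frob_s19 hw⟩

theorem two_mul_genus (h : IsNumericalSemigroup S) :
    2 * (genus S : ℤ) = frob S + 1 + (holes S).ncard := by
  set F := frob S
  set N := {z ∈ S | z ≤ F}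
  set G := {z : ℤ | 0 ≤ z ∧ z ∉ S}
  have hIcc : Set.Icc 0 F = N ∪ G := by
    ext z
    simp only [Set.mem_Icc, Set.mem_union, Set.mem_ofPred_eq, N, G]
    by_cases hz : z ∈ S
    · simp [hz, h.1 z hz]
    · simpa [hz] using fun _ => h.le_frob_s19 hz
  have hG : G = (F - ·) '' N ∪ holes S := by
    ext z
    simp only [Set.mem_union, Set.mem_image, Set.mem_ofPred_eq, N, G]
    constructor
    · rintro ⟨hz0, hz⟩
      by_cases hFz : F - z ∈ S
      · exact Or.inl ⟨F - z, ⟨hFz, by linarith⟩, by ring⟩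
      · exact Or.inr ⟨hz, hFz⟩
    · rintro (⟨u, ⟨hu, huF⟩, rfl⟩ | hz)
      · exact ⟨by linarith, h.frob_sub_notMem hu⟩
      · exact ⟨(h.holes_subset_Icc hz).1, hz.1⟩
  have hfin : (Set.Icc 0 F).Finite := Set.finite_Icc 0 F
  have hNG : N.ncard + G.ncard = (F + 1).toNat := by
    rw [← sub_zero (F + 1), ← Int.ncard_Icc, hIcc, Set.ncard_union_eq
      (Set.disjoint_left.mpr fun z hN hG => hG.2 hN.1)
      (hfin.subset (by rw [hIcc]; exact Set.subset_union_left))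
      (hfin.subset (by rw [hIcc]; exact Set.subset_union_right))]
  have hGholes : G.ncard = N.ncard + (holes S).ncard := by
    rw [hG, Set.ncard_union_eq
      (Set.disjoint_left.mpr ?_)
      ((hfin.subset (by rw [hIcc]; exact Set.subset_union_left)).image _)
      (hfin.subset h.holes_subset_Icc),
      Set.ncard_image_of_injective _ sub_right_injective]
    rintro _ ⟨u, ⟨hu, -⟩, rfl⟩ ⟨-, hu'⟩
    exact hu' (by simpa [F] using hu)
  have := h.neg_one_le_frob
  change 2 * (G.ncard : ℤ) = _
  omega

theorem PF_subset_insert_frob_holes (h : IsNumericalSemigroup S) :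
    PF S ⊆ insert (frob S) (holes S) := by
  intro f hf
  by_cases hne : f = frob S
  · exact Or.inl hne
  · exact Or.inr ⟨hf.1, h.frob_sub_notMem_of_mem_PF hf hne⟩

theorem holes_subset_PF (h : IsNumericalSemigroup S) (hAS : AlmostSymmetric S) :
    holes S ⊆ PF S := by
  have htyp : typ S = (holes S).ncard + 1 := by
    have := h.two_mul_genus
    unfold AlmostSymmetric at hAS
    omega
  have hPF : PF S = insert (frob S) (holes S) :=
    Set.eq_of_subset_of_ncard_le h.PF_subset_insert_frob_holes
      ((Set.ncard_insert_le _ _).trans htyp.symm.le)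
      (((Set.finite_Icc 0 (frob S)).subset h.holes_subset_Icc).insert (frob S))
  exact hPF ▸ Set.subset_insert _ _

end IsNumericalSemigroup

section Glue

variable {S₁ S₂ : Set ℤ} {x y : ℤ}

theorem glue_comm (x y : ℤ) (S₁ S₂ : Set ℤ) : glue x y S₁ S₂ = glue y x S₂ S₁ := by
  ext z
  constructor <;> rintro ⟨a, ha, b, hb, rfl⟩ <;> exact ⟨b, hb, a, ha, by ring⟩

theorem mul_add_mul_mem_glue_iff (hcop : Int.gcd x y = 1) (hy0 : y ≠ 0) {A B : ℤ} :
    x * A + y * B ∈ glue x y S₁ S₂ ↔ ∃ k : ℤ, A - k * y ∈ S₁ ∧ B + k * x ∈ S₂ := by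
  constructor
  · rintro ⟨a, ha, b, hb, heq⟩
    obtain ⟨k, hk⟩ : y ∣ A - a := (Int.isCoprime_iff_gcd_eq_one.mpr hcop).symm.dvd_of_dvd_mul_left
      ⟨b - B, by linarith⟩
    have hb' : B + k * x = b := mul_left_cancel₀ hy0 (by linear_combination heq - x * hk)
    exact ⟨k, by rwa [show A - k * y = a by linarith], hb' ▸ hb⟩
  · rintro ⟨k, ha, hb⟩
    exact ⟨_, ha, _, hb, by ring⟩

theorem mul_add_mul_add_mul_notMem_glue (h₁ : IsNumericalSemigroup S₁)
    (h₂ : IsNumericalSemigroup S₂) (hy : y ∈ S₁) (hx : x ∈ S₂) (hy0 : y ≠ 0)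
    (hcop : Int.gcd x y = 1) {a b : ℤ} (ha : a ∉ S₁) (hb : b ∉ S₂) :
    x * a + y * b + x * y ∉ glue x y S₁ S₂ := by
  rw [show x * a + y * b + x * y = x * a + y * (b + x) by ring,
    mul_add_mul_mem_glue_iff hcop hy0]
  rintro ⟨k, hk₁, hk₂⟩
  rcases le_or_gt 0 k with hk | hk
  · exact ha (by simpa using h₁.add_mul_mem hk₁ hy hk)
  · have := h₂.add_mul_mem hk₂ hx (show 0 ≤ -(k + 1) by omega)
    exact hb (by convert this using 1; ring)

theorem mem_glue_of_lt (h₁ : IsNumericalSemigroup S₁) (h₂ : IsNumericalSemigroup S₂)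
    (hx : 0 ≤ x) (hy : 0 < y) (hcop : Int.gcd x y = 1) {z : ℤ}
    (hz : x * frob S₁ + y * frob S₂ + x * y < z) : z ∈ glue x y S₁ S₂ := by
  obtain ⟨u, v, huv⟩ := Int.isCoprime_iff_gcd_eq_one.mpr hcop
  have hzuv : z = x * (u * z) + y * (v * z) := by linear_combination (-z) * huv
  set k := (u * z - frob S₁ - 1) / y
  have hk₁ := Int.emod_add_mul_ediv (u * z - frob S₁ - 1) y
  have hk₂ := Int.emod_nonneg (u * z - frob S₁ - 1) hy.ne'
  have hk₃ := Int.emod_lt_of_pos (u * z - frob S₁ - 1) hy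
  rw [hzuv, mul_add_mul_mem_glue_iff hcop hy.ne']
  refine ⟨k, h₁.mem_of_frob_lt_s19 (by linarith), h₂.mem_of_frob_lt_s19 ?_⟩
  have : x * (u * z - k * y) ≤ x * (frob S₁ + y) := mul_le_mul_of_nonneg_left (by linarith) hx
  nlinarith

theorem isNumericalSemigroup_glue (h₁ : IsNumericalSemigroup S₁) (h₂ : IsNumericalSemigroup S₂)
    (hx : 0 ≤ x) (hy : 0 < y) (hcop : Int.gcd x y = 1) :
    IsNumericalSemigroup (glue x y S₁ S₂) := by
  refine ⟨?_, ⟨0, h₁.2.1, 0, h₂.2.1, by ring⟩, ?_, ?_⟩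
  · rintro _ ⟨a, ha, b, hb, rfl⟩
    have := h₁.1 a ha
    have := h₂.1 b hb
    positivity
  · rintro _ ⟨a, ha, b, hb, rfl⟩ _ ⟨a', ha', b', hb', rfl⟩
    exact ⟨a + a', h₁.2.2.1 a ha a' ha', b + b', h₂.2.2.1 b hb b' hb', by ring⟩
  · refine (Set.finite_Icc 0 (x * frob S₁ + y * frob S₂ + x * y)).subset fun z ⟨hz0, hz⟩ => ?_
    exact ⟨hz0, not_lt.mp fun hlt => hz (mem_glue_of_lt h₁ h₂ hx hy hcop hlt)⟩

theorem frob_glue (h₁ : IsNumericalSemigroup S₁) (h₂ : IsNumericalSemigroup S₂)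
    (hy : y ∈ S₁) (hx : x ∈ S₂) (hy0 : 0 < y) (hcop : Int.gcd x y = 1) :
    frob (glue x y S₁ S₂) = x * frob S₁ + y * frob S₂ + x * y :=
  IsGreatest.csSup_eq
    ⟨mul_add_mul_add_mul_notMem_glue h₁ h₂ hy hx hy0.ne' hcop h₁.frob_notMem h₂.frob_notMem,
      fun _ hz => not_lt.mp fun hlt => hz (mem_glue_of_lt h₁ h₂ (h₂.1 x hx) hy0 hcop hlt)⟩

theorem not_almostSymmetric_glue_of_typ_ne_one (h₁ : IsNumericalSemigroup S₁)
    (h₂ : IsNumericalSemigroup S₂) (hy : y ∈ S₁) (hx : x ∈ S₂) (hx2 : 2 ≤ x) (hy0 : 0 < y)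
    (hcop : Int.gcd x y = 1) (ht : typ S₁ ≠ 1) : ¬ AlmostSymmetric (glue x y S₁ S₂) := by
  intro hAS
  have hgap : ∀ {a b}, a ∉ S₁ → b ∉ S₂ → x * a + y * b + x * y ∉ glue x y S₁ S₂ :=
    mul_add_mul_add_mul_notMem_glue h₁ h₂ hy hx hy0.ne' hcop
  obtain ⟨f, hf, hfF⟩ := h₁.exists_mem_PF_ne_frob ht
  have hd := h₁.frob_sub_notMem_of_mem_PF hf hfF
  have hw : x * (frob S₁ - f) ∉ glue x y S₁ S₂ := by
    convert hgap hd (b := -x) fun hc => by linarith [h₂.1 _ hc] using 2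
    ring
  have hw' : frob (glue x y S₁ S₂) - x * (frob S₁ - f) ∉ glue x y S₁ S₂ := by
    rw [frob_glue h₁ h₂ hy hx hy0 hcop]
    convert hgap hf.1 h₂.frob_notMem using 2
    ring
  have hwPF := (isNumericalSemigroup_glue h₁ h₂ (by omega) hy0 hcop).holes_subset_PF hAS ⟨hw, hw'⟩
  have hF₂ := h₂.neg_one_le_frob
  have hshift : y * (frob S₂ + x) ∈ glue x y S₁ S₂ :=
    ⟨0, h₁.2.1, frob S₂ + x, h₂.mem_of_frob_lt_s19 (by linarith), by ring⟩
  refine hgap hd h₂.frob_notMem ?_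
  convert hwPF.2 _ hshift (mul_pos hy0 (by linarith)).ne' using 1
  ring

end Glue

theorem stmt19 (S₁ S₂ : Set ℤ) (h₁ : IsNumericalSemigroup S₁) (h₂ : IsNumericalSemigroup S₂)
    (x y : ℤ) (hy : y ∈ S₁) (hy' : y ∉ minGens S₁)
    (hx : x ∈ S₂) (hx' : x ∉ minGens S₂) (hcop : Int.gcd x y = 1)
    (hns : typ S₁ ≠ 1 ∨ typ S₂ ≠ 1) :
    ¬ AlmostSymmetric (glue x y S₁ S₂) := by
  have hx1 : x ≠ 1 := by
    rintro rfl
    exact hx' (h₂.one_mem_minGens hx)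
  have hy1 : y ≠ 1 := by
    rintro rfl
    exact hy' (h₁.one_mem_minGens hy)
  obtain ⟨hx2, hy2⟩ := Int.two_le_of_gcd_eq_one (h₂.1 x hx) (h₁.1 y hy) hx1 hy1 hcop
  rcases hns with ht | ht
  · exact not_almostSymmetric_glue_of_typ_ne_one h₁ h₂ hy hx hx2 (by omega) hcop ht
  · rw [glue_comm]
    exact not_almostSymmetric_glue_of_typ_ne_one h₂ h₁ hx hy hy2 (by omega)
      (by rwa [Int.gcd_comm]) ht
end
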